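/- For two finite groups G and G' of coprime orders, CF₂(G × G') = CF₂(G) · CF₂(G'). -/

import Mathlib

open Pointwise

/-- The cyclic factorization number `CF₂(G)`: the number of ordered pairs `(H, K)` of
cyclic subgroups of `G` whose set product `HK` is all of `G`. -/
noncomputable def CF2 (G : Type*) [Group G] : ℕ :=
  Nat.card {p : Subgroup G × Subgroup G //
    IsCyclic p.1 ∧ IsCyclic p.2 ∧ (p.1 : Set G) * (p.2 : Set G) = Set.univ}

/-!
When `|G|` and `|G'|` are coprime, every subgroup `L` of `G × G'` is the product of its two
projections: by the Chinese remainder theorem some power `n` acts as the identity on `G` and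
kills `G'`, so `(x, y) ∈ L` gives `(x, y) ^ n = (x, 1) ∈ L`. Hence `(H, H') ↦ H × H'` is a
bijection `Sub G × Sub G' ≃ Sub (G × G')`. It respects cyclicity (a product of cyclic groups
of coprime orders is cyclic) and set products, `(H × H')(K × K') = HK × H'K'`, so it matches
the cyclic factorizations of `G × G'` with pairs of cyclic factorizations of `G` and `G'`.
-/

section

variable {G G' : Type*} [Group G] [Group G']

def IsCyclicFactorization (H K : Subgroup G) : Prop :=
  IsCyclic H ∧ IsCyclic K ∧ (H : Set G) * (K : Set G) = Set.univ

theorem CF2_eq_card_isCyclicFactorization :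
    CF2 G = Nat.card {p : Subgroup G × Subgroup G // IsCyclicFactorization p.1 p.2} :=
  rfl

theorem exists_pow_eq_self_and_pow_eq_one_of_coprime [Finite G] [Finite G']
    (h : (Nat.card G).Coprime (Nat.card G')) :
    ∃ n : ℕ, (∀ g : G, g ^ n = g) ∧ ∀ g' : G', g' ^ n = 1 := by
  obtain ⟨n, hn, hn'⟩ := Nat.chineseRemainder h 1 0
  refine ⟨n, fun g ↦ ?_, fun g' ↦ ?_⟩
  · simpa using pow_eq_pow_iff_modEq.mpr (hn.of_dvd (orderOf_dvd_natCard g))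
  · simpa using pow_eq_pow_iff_modEq.mpr (hn'.of_dvd (orderOf_dvd_natCard g'))

namespace Subgroup

theorem map_fst_prod (H : Subgroup G) (H' : Subgroup G') :
    (H.prod H').map (MonoidHom.fst G G') = H := by
  ext x
  simpa [mem_prod] using fun _ ↦ ⟨1, H'.one_mem⟩

theorem map_snd_prod (H : Subgroup G) (H' : Subgroup G') :
    (H.prod H').map (MonoidHom.snd G G') = H' := by
  ext x
  simpa [mem_prod] using fun _ ↦ ⟨1, H.one_mem⟩

theorem isCyclic_prod_iff_of_coprime (h : (Nat.card G).Coprime (Nat.card G'))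
    {H : Subgroup G} {H' : Subgroup G'} :
    IsCyclic (H.prod H') ↔ IsCyclic H ∧ IsCyclic H' := by
  have hcard : (Nat.card H).Coprime (Nat.card H') :=
    (h.coprime_dvd_left H.card_subgroup_dvd_card).coprime_dvd_right H'.card_subgroup_dvd_card
  rw [(H.prodEquiv H').isCyclic, Group.isCyclic_prod_iff]
  tauto

section Coprime

variable [Finite G] [Finite G'] (h : (Nat.card G).Coprime (Nat.card G'))
include h

theorem mk_fst_one_mem_of_coprime (L : Subgroup (G × G')) {x : G × G'} (hx : x ∈ L) :
    (x.1, (1 : G')) ∈ L := by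
  obtain ⟨n, hG, hG'⟩ := exists_pow_eq_self_and_pow_eq_one_of_coprime h
  have hxn : x ^ n = (x.1, 1) := Prod.ext (hG x.1) (hG' x.2)
  exact hxn ▸ L.pow_mem hx n

theorem mk_one_snd_mem_of_coprime (L : Subgroup (G × G')) {x : G × G'} (hx : x ∈ L) :
    ((1 : G), x.2) ∈ L := by
  obtain ⟨n, hG', hG⟩ := exists_pow_eq_self_and_pow_eq_one_of_coprime h.symm
  have hxn : x ^ n = (1, x.2) := Prod.ext (hG x.1) (hG' x.2)
  exact hxn ▸ L.pow_mem hx n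

theorem prod_map_fst_map_snd_of_coprime (L : Subgroup (G × G')) :
    (L.map (MonoidHom.fst G G')).prod (L.map (MonoidHom.snd G G')) = L := by
  refine le_antisymm ?_ (le_prod_iff.mpr ⟨le_rfl, le_rfl⟩)
  rintro ⟨a, b⟩ ⟨⟨x, hx, rfl⟩, ⟨y, hy, rfl⟩⟩
  simpa using L.mul_mem (mk_fst_one_mem_of_coprime h L hx) (mk_one_snd_mem_of_coprime h L hy)

def prodEquivOfCoprime : Subgroup G × Subgroup G' ≃ Subgroup (G × G') where
  toFun p := p.1.prod p.2
  invFun L := (L.map (MonoidHom.fst G G'), L.map (MonoidHom.snd G G'))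
  left_inv p := Prod.ext (map_fst_prod p.1 p.2) (map_snd_prod p.1 p.2)
  right_inv := prod_map_fst_map_snd_of_coprime h

end Coprime

end Subgroup

theorem isCyclicFactorization_prod_iff_of_coprime (h : (Nat.card G).Coprime (Nat.card G'))
    {H K : Subgroup G} {H' K' : Subgroup G'} :
    IsCyclicFactorization (H.prod H') (K.prod K') ↔
      IsCyclicFactorization H K ∧ IsCyclicFactorization H' K' := by
  simp only [IsCyclicFactorization, Subgroup.isCyclic_prod_iff_of_coprime h,
    Subgroup.coe_prod, Set.prod_mul_prod_comm, Set.prod_eq_univ]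
  tauto

end

theorem cf2_prod (G G' : Type*) [Group G] [Group G'] [Fintype G] [Fintype G']
    (h : Nat.Coprime (Nat.card G) (Nat.card G')) :
    CF2 (G × G') = CF2 G * CF2 G' := by
  let e := Subgroup.prodEquivOfCoprime h
  -- `((H, K), (H', K')) ↦ (H × H', K × K')`
  let E := (Equiv.prodProdProdComm _ _ _ _).trans (e.prodCongr e)
  simp only [CF2_eq_card_isCyclicFactorization, ← Nat.card_prod]
  refine Nat.card_congr ((E.subtypeEquiv fun _ ↦ ?_).symm.trans Equiv.subtypeProdEquivProd)
  exact (isCyclicFactorization_prod_iff_of_coprime h).symm
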